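/- Let M be a fixed positive integer. Then the remainder R_M = (λ_n/π) ∑_{k=M}^∞ [((1/2)_k)^2/((n+1)_k k!)] · {∑_{r=1}^k 1/(n+r) − σ_k} satisfies |R_M| ≤ (4λ_n/π²) · Γ(n)Γ(M+1/2)² / Γ(n−M) for all n > M, and hence R_M = O(n^{−M}) as n → ∞, where σ_k = ∑_{r=1}^k (2r+1)/((2r−1)r) and λ_n = Γ(n+1/2)²/(Γ(n)Γ(n+1)). -/
import Mathlib


/-- The Pochhammer (rising factorial) symbol `(x)_k` for real `x`. -/
noncomputable def rpoch (x : ℝ) (k : ℕ) : ℝ := ∏ i ∈ Finset.range k, (x + i)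

/-- The coefficients `σ_k = ∑_{r=1}^k (2r+1)/((2r-1)r)`. -/
noncomputable def landauSigma (k : ℕ) : ℝ :=
  ∑ r ∈ Finset.Icc 1 k, (2 * (r : ℝ) + 1) / ((2 * (r : ℝ) - 1) * r)

/-- `λ_n = Γ(n+1/2)²/(Γ(n)Γ(n+1))`. -/
noncomputable def landauLambda (n : ℕ) : ℝ :=
  Real.Gamma ((n : ℝ) + 1 / 2) ^ 2 / (Real.Gamma n * Real.Gamma ((n : ℝ) + 1))

/-- The remainder `R_M` after `M - 1` terms of the sum in the rearranged Landau expansion. -/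
noncomputable def landauRemainder (M n : ℕ) : ℝ :=
  landauLambda n / Real.pi *
    ∑' k : ℕ, (rpoch (1 / 2) (k + M)) ^ 2 /
        (rpoch ((n : ℝ) + 1) (k + M) * (Nat.factorial (k + M) : ℝ)) *
      ((∑ r ∈ Finset.Icc 1 (k + M), 1 / ((n : ℝ) + r)) - landauSigma (k + M))

namespace LandauAux

lemma rpoch_zero (x : ℝ) : rpoch x 0 = 1 := by simp [rpoch]

lemma rpoch_succ (x : ℝ) (k : ℕ) : rpoch x (k+1) = rpoch x k * (x + k) := by
  simp [rpoch, Finset.prod_range_succ]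

lemma rpoch_pos {x : ℝ} (hx : 0 < x) (k : ℕ) : 0 < rpoch x k :=
  Finset.prod_pos fun i _ => by positivity

lemma one_le_rpoch {x : ℝ} (hx : 1 ≤ x) (k : ℕ) : 1 ≤ rpoch x k := by
  have h : (1:ℝ) = ∏ _i ∈ Finset.range k, (1:ℝ) := by simp
  rw [h, rpoch]
  apply Finset.prod_le_prod (fun i _ => zero_le_one)
  intro i _
  have : (0:ℝ) ≤ (i:ℝ) := Nat.cast_nonneg i
  linarith

lemma pow_le_rpoch {x : ℝ} (hx : 0 ≤ x) (m : ℕ) : x ^ m ≤ rpoch (x+1) m := by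
  have h : x ^ m = ∏ _i ∈ Finset.range m, x := by
    rw [Finset.prod_const, Finset.card_range]
  rw [h, rpoch]
  apply Finset.prod_le_prod (fun i _ => hx)
  intro i _
  have : (0:ℝ) ≤ (i:ℝ) := Nat.cast_nonneg i
  linarith

lemma rpoch_add' (x : ℝ) (m k : ℕ) : rpoch x (k + m) = rpoch x m * rpoch (x + m) k := by
  rw [add_comm k m, rpoch, Finset.prod_range_add]
  congr 1
  apply Finset.prod_congr rfl
  intro i _
  push_cast
  ring

lemma fact_rpoch (m k : ℕ) : ((m+k).factorial : ℝ) = (m.factorial : ℝ) * rpoch ((m:ℝ)+1) k := by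
  induction k with
  | zero => simp [rpoch_zero]
  | succ k ih =>
    have h : m + (k+1) = (m+k) + 1 := rfl
    rw [h, Nat.factorial_succ, Nat.cast_mul, ih, rpoch_succ]
    push_cast
    ring

lemma Gamma_add_nat {x : ℝ} (hx : 0 < x) (m : ℕ) :
    Real.Gamma (x + m) = rpoch x m * Real.Gamma x := by
  induction m with
  | zero => simp [rpoch_zero]
  | succ k ih =>
    have h : x + ((k:ℝ)+1) = (x + k) + 1 := by ring
    have hk : (0:ℝ) ≤ k := Nat.cast_nonneg k
    push_cast
    rw [h, Real.Gamma_add_one (by positivity), ih, rpoch_succ]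
    ring

lemma sum_nonneg' (n j : ℕ) : 0 ≤ ∑ r ∈ Finset.Icc 1 j, 1 / ((n:ℝ) + r) := by
  apply Finset.sum_nonneg
  intro r hr
  have h0 : (0:ℝ) ≤ n := Nat.cast_nonneg n
  have h1 : (1:ℝ) ≤ r := by exact_mod_cast (Finset.mem_Icc.mp hr).1
  positivity

lemma sum_le_sigma (n j : ℕ) :
    ∑ r ∈ Finset.Icc 1 j, 1 / ((n:ℝ) + r) ≤ landauSigma j := by
  apply Finset.sum_le_sum
  intro r hr
  have hr' : (1:ℝ) ≤ r := by exact_mod_cast (Finset.mem_Icc.mp hr).1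
  have hn : (0:ℝ) ≤ n := Nat.cast_nonneg n
  rw [div_le_div_iff₀ (by linarith) (by nlinarith)]
  nlinarith

lemma sigma_le (j : ℕ) : landauSigma j ≤ 3 * j := by
  have h : landauSigma j ≤ (Finset.Icc 1 j).card • (3:ℝ) := by
    apply Finset.sum_le_card_nsmul
    intro r hr
    have hr' : (1:ℝ) ≤ r := by exact_mod_cast (Finset.mem_Icc.mp hr).1
    rw [div_le_iff₀ (by nlinarith)]
    nlinarith
  rw [Nat.card_Icc] at h
  simp only [nsmul_eq_mul, Nat.add_sub_cancel] at h
  linarith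

lemma key_ind (m n : ℕ) (hn : m + 2 ≤ n) (k : ℕ) :
    ((k:ℝ) + 18/7) * ((k:ℝ) + 25/7) * rpoch (1/2 + ((m:ℝ)+1)) k ^ 2 ≤
      (18/7) * (25/7) * (rpoch (((n:ℝ)+1) + ((m:ℝ)+1)) k * rpoch ((m:ℝ)+1) k) := by
  have hm : (0:ℝ) ≤ m := Nat.cast_nonneg m
  have hn' : (m:ℝ) + 2 ≤ n := by exact_mod_cast hn
  induction k with
  | zero =>
    simp only [Nat.cast_zero, rpoch_zero, zero_add, one_pow, mul_one]
    norm_num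
  | succ k ih =>
    have hk : (0:ℝ) ≤ k := Nat.cast_nonneg k
    have hRc : 0 < rpoch (((n:ℝ)+1) + ((m:ℝ)+1)) k := rpoch_pos (by positivity) k
    have hRm : 0 < rpoch ((m:ℝ)+1) k := rpoch_pos (by positivity) k
    have hX : (0:ℝ) ≤ rpoch (1/2 + ((m:ℝ)+1)) k ^ 2 := sq_nonneg _
    have hpoly : ((k:ℝ)+1+18/7) * ((k:ℝ)+1+25/7) * ((1/2 + ((m:ℝ)+1)) + k)^2 ≤
        ((k:ℝ)+18/7) * ((k:ℝ)+25/7) * ((((n:ℝ)+1) + ((m:ℝ)+1)) + k) * (((m:ℝ)+1) + k) := by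
      nlinarith [mul_nonneg (mul_nonneg (sub_nonneg.mpr hn') (by positivity : (0:ℝ) ≤ (m:ℝ)+1+k)) (by positivity : (0:ℝ) ≤ ((k:ℝ)+18/7)*((k:ℝ)+25/7)),
        mul_nonneg (by positivity : (0:ℝ) ≤ (k:ℝ)+25/7) (mul_nonneg (mul_nonneg hm hk) hk),
        mul_nonneg (by positivity : (0:ℝ) ≤ (k:ℝ)+25/7) (mul_nonneg (by positivity : (0:ℝ) ≤ (m:ℝ)*m + 11/7*m + 25/28) hk),
        mul_nonneg (by positivity : (0:ℝ) ≤ (k:ℝ)+25/7) (mul_nonneg hm (by positivity : (0:ℝ) ≤ (m:ℝ)+3))]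
    have h2 := mul_le_mul_of_nonneg_right hpoly hX
    have h3 := mul_le_mul_of_nonneg_left ih
      (le_of_lt (mul_pos (by positivity : (0:ℝ) < (((n:ℝ)+1) + ((m:ℝ)+1)) + k) (by positivity : (0:ℝ) < ((m:ℝ)+1) + k)))
    rw [rpoch_succ, rpoch_succ, rpoch_succ]
    push_cast
    nlinarith [h2, h3]

lemma q_le (m n : ℕ) (hn : m + 2 ≤ n) (k : ℕ) :
    rpoch (1/2 + ((m:ℝ)+1)) k ^ 2 / (rpoch (((n:ℝ)+1) + ((m:ℝ)+1)) k * rpoch ((m:ℝ)+1) k)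
      ≤ (18/7)*(25/7)/(((k:ℝ)+18/7)*((k:ℝ)+25/7)) := by
  have hRc : 0 < rpoch (((n:ℝ)+1) + ((m:ℝ)+1)) k := rpoch_pos (by positivity) k
  have hRm : 0 < rpoch ((m:ℝ)+1) k := rpoch_pos (by positivity) k
  have hk : (0:ℝ) ≤ k := Nat.cast_nonneg k
  rw [div_le_div_iff₀ (by positivity) (by positivity)]
  nlinarith [key_ind m n hn k]

lemma term_eq (m n k : ℕ) :
    rpoch (1/2) (k + (m+1)) ^ 2 /
        (rpoch ((n:ℝ)+1) (k + (m+1)) * (Nat.factorial (k + (m+1)) : ℝ)) *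
      (3 * ((k:ℝ) + ((m:ℝ)+1)))
    = 3 * (rpoch (1/2) (m+1) ^ 2 / (rpoch ((n:ℝ)+1) (m+1) * (Nat.factorial m : ℝ))) *
      (rpoch (1/2 + ((m:ℝ)+1)) k ^ 2 / (rpoch (((n:ℝ)+1) + ((m:ℝ)+1)) k * rpoch ((m:ℝ)+1) k)) := by
  have h1 : rpoch (1/2) (k + (m+1)) = rpoch (1/2) (m+1) * rpoch (1/2 + ((m:ℝ)+1)) k := by
    rw [rpoch_add' (1/2) (m+1) k]; push_cast; ring_nf
  have h2 : rpoch ((n:ℝ)+1) (k + (m+1)) =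
      rpoch ((n:ℝ)+1) (m+1) * rpoch (((n:ℝ)+1) + ((m:ℝ)+1)) k := by
    rw [rpoch_add' ((n:ℝ)+1) (m+1) k]; push_cast; ring_nf
  have h3 : (Nat.factorial (k + (m+1)) : ℝ) =
      (Nat.factorial m : ℝ) * rpoch ((m:ℝ)+1) k * ((k:ℝ) + ((m:ℝ)+1)) := by
    have e : k + (m+1) = (m + k) + 1 := by omega
    rw [e, Nat.factorial_succ, Nat.cast_mul, fact_rpoch]
    push_cast
    ring
  have p1 : (0:ℝ) < rpoch (1/2) (m+1) := rpoch_pos (by norm_num) _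
  have p2 : (0:ℝ) < rpoch ((n:ℝ)+1) (m+1) := rpoch_pos (by positivity) _
  have p3 : (0:ℝ) < rpoch (((n:ℝ)+1) + ((m:ℝ)+1)) k := rpoch_pos (by positivity) _
  have p4 : (0:ℝ) < rpoch ((m:ℝ)+1) k := rpoch_pos (by positivity) _
  have p5 : (0:ℝ) < (Nat.factorial m : ℝ) := by exact_mod_cast Nat.factorial_pos m
  have p6 : (0:ℝ) < (k:ℝ) + ((m:ℝ)+1) := by positivity
  rw [h1, h2, h3]
  field_simp

lemma tel_hasSum : HasSum (fun k : ℕ => (18/7:ℝ)*(25/7)/(((k:ℝ)+18/7)*((k:ℝ)+25/7))) (25/7) := by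
  have hnn : ∀ k : ℕ, (0:ℝ) ≤ (18/7:ℝ)*(25/7)/(((k:ℝ)+18/7)*((k:ℝ)+25/7)) := by
    intro k; positivity
  rw [hasSum_iff_tendsto_nat_of_nonneg hnn]
  have hw : ∀ k : ℕ, (18/7:ℝ)*(25/7)/(((k:ℝ)+18/7)*((k:ℝ)+25/7)) =
      (18/7:ℝ)*(25/7)/((k:ℝ)+18/7) - (18/7:ℝ)*(25/7)/(((k+1:ℕ):ℝ)+18/7) := by
    intro k
    have hk : (0:ℝ) ≤ k := Nat.cast_nonneg k
    push_cast
    rw [div_sub_div _ _ (by positivity) (by positivity), div_eq_div_iff (by positivity) (by positivity)]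
    ring
  simp_rw [hw]
  have hsum : ∀ N : ℕ, ∑ k ∈ Finset.range N,
      ((18/7:ℝ)*(25/7)/((k:ℝ)+18/7) - (18/7:ℝ)*(25/7)/(((k+1:ℕ):ℝ)+18/7)) =
      25/7 - (18/7:ℝ)*(25/7)/((N:ℝ)+18/7) := by
    intro N
    rw [Finset.sum_range_sub' (fun k : ℕ => (18/7:ℝ)*(25/7)/((k:ℝ)+18/7)) N]
    norm_num
  simp_rw [hsum]
  have h0 : Filter.Tendsto (fun N : ℕ => (18/7:ℝ)*(25/7)/((N:ℝ)+18/7)) Filter.atTop (nhds 0) := by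
    apply Filter.Tendsto.div_atTop tendsto_const_nhds
    apply Filter.tendsto_atTop_add_const_right
    exact tendsto_natCast_atTop_atTop
  have h1 := Filter.Tendsto.const_sub (25/7:ℝ) h0
  simpa using h1

lemma lambda_pos {n : ℕ} (hn : 0 < n) : 0 < landauLambda n := by
  have h : (0:ℝ) < n := by exact_mod_cast hn
  unfold landauLambda
  have h1 := Real.Gamma_pos_of_pos h
  have h2 := Real.Gamma_pos_of_pos (by linarith : (0:ℝ) < (n:ℝ) + 1)
  have h3 := Real.Gamma_pos_of_pos (by linarith : (0:ℝ) < (n:ℝ) + 1/2)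
  positivity

lemma lambda_le_one {n : ℕ} (hn : 0 < n) : landauLambda n ≤ 1 := by
  have h : (0:ℝ) < n := by exact_mod_cast hn
  have h1 := Real.Gamma_pos_of_pos h
  have h2 := Real.Gamma_pos_of_pos (by linarith : (0:ℝ) < (n:ℝ) + 1)
  have h3 := Real.Gamma_pos_of_pos (by linarith : (0:ℝ) < (n:ℝ) + 1/2)
  have hcv := Real.convexOn_log_Gamma.2 (Set.mem_Ioi.mpr h)
    (Set.mem_Ioi.mpr (by linarith : (0:ℝ) < (n:ℝ)+1))
    (by norm_num : (0:ℝ) ≤ 1/2) (by norm_num : (0:ℝ) ≤ 1/2) (by norm_num)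
  simp only [smul_eq_mul, Function.comp_apply] at hcv
  have harg : (1/2:ℝ)*(n:ℝ) + (1/2:ℝ)*((n:ℝ)+1) = (n:ℝ) + 1/2 := by ring
  rw [harg] at hcv
  unfold landauLambda
  rw [div_le_one (by positivity)]
  have e1 : Real.Gamma ((n:ℝ)+1/2) ^ 2 =
      Real.exp (Real.log (Real.Gamma ((n:ℝ)+1/2)) + Real.log (Real.Gamma ((n:ℝ)+1/2))) := by
    rw [Real.exp_add, Real.exp_log h3]; ring
  have e2 : Real.Gamma (n:ℝ) * Real.Gamma ((n:ℝ)+1) =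
      Real.exp (Real.log (Real.Gamma (n:ℝ)) + Real.log (Real.Gamma ((n:ℝ)+1))) := by
    rw [Real.exp_add, Real.exp_log h1, Real.exp_log h2]
  rw [e1, e2]
  apply Real.exp_le_exp.mpr
  linarith

lemma remainder_le (m n : ℕ) (hn : m + 2 ≤ n) :
    |landauRemainder (m+1) n| ≤ landauLambda n / Real.pi *
      (3 * (rpoch (1/2) (m+1) ^ 2 / (rpoch ((n:ℝ)+1) (m+1) * (Nat.factorial m : ℝ))) * (25/7)) := by
  have hn0 : 0 < n := by omega
  have hπ := Real.pi_pos
  have hlam := lambda_pos hn0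
  have p1 : (0:ℝ) < rpoch (1/2) (m+1) := rpoch_pos (by norm_num) _
  have p2 : (0:ℝ) < rpoch ((n:ℝ)+1) (m+1) := rpoch_pos (by positivity) _
  have p5 : (0:ℝ) < (Nat.factorial m : ℝ) := by exact_mod_cast Nat.factorial_pos m
  set C₁ : ℝ := rpoch (1/2) (m+1) ^ 2 / (rpoch ((n:ℝ)+1) (m+1) * (Nat.factorial m : ℝ)) with hC₁
  have hC₁pos : 0 < C₁ := by rw [hC₁]; positivity
  set f : ℕ → ℝ := fun k => rpoch (1/2) (k + (m+1)) ^ 2 /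
        (rpoch ((n:ℝ)+1) (k + (m+1)) * (Nat.factorial (k + (m+1)) : ℝ)) *
      ((∑ r ∈ Finset.Icc 1 (k + (m+1)), 1 / ((n:ℝ) + r)) - landauSigma (k + (m+1))) with hf
  set g : ℕ → ℝ := fun k =>
      (3 * C₁) * ((18/7:ℝ)*(25/7)/(((k:ℝ)+18/7)*((k:ℝ)+25/7))) with hg
  have hfg : ∀ k, |f k| ≤ g k := by
    intro k
    have hp : (0:ℝ) < rpoch (1/2) (k + (m+1)) ^ 2 /
        (rpoch ((n:ℝ)+1) (k + (m+1)) * (Nat.factorial (k + (m+1)) : ℝ)) := by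
      have q1 : (0:ℝ) < rpoch (1/2) (k + (m+1)) := rpoch_pos (by norm_num) _
      have q2 : (0:ℝ) < rpoch ((n:ℝ)+1) (k + (m+1)) := rpoch_pos (by positivity) _
      have q3 : (0:ℝ) < (Nat.factorial (k + (m+1)) : ℝ) := by
        exact_mod_cast Nat.factorial_pos _
      positivity
    have hd : |(∑ r ∈ Finset.Icc 1 (k + (m+1)), 1 / ((n:ℝ) + r)) - landauSigma (k + (m+1))| ≤
        3 * ((k:ℝ) + ((m:ℝ)+1)) := by
      have h0 := sum_nonneg' n (k+(m+1))
      have h1 := sum_le_sigma n (k+(m+1))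
      have h2 := sigma_le (k+(m+1))
      push_cast at h2
      rw [abs_sub_comm, abs_of_nonneg (by linarith)]
      linarith
    have step1 : |f k| ≤ rpoch (1/2) (k + (m+1)) ^ 2 /
        (rpoch ((n:ℝ)+1) (k + (m+1)) * (Nat.factorial (k + (m+1)) : ℝ)) *
        (3 * ((k:ℝ) + ((m:ℝ)+1))) := by
      rw [hf]
      simp only []
      rw [abs_mul, abs_of_pos hp]
      exact mul_le_mul_of_nonneg_left hd hp.le
    rw [term_eq m n k] at step1
    refine step1.trans ?_
    rw [hg, hC₁]
    simp only []
    apply mul_le_mul_of_nonneg_left (q_le m n hn k)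
    positivity
  have hgsum : HasSum g ((3 * C₁) * (25/7)) := tel_hasSum.mul_left (3 * C₁)
  have habs : Summable fun k => |f k| :=
    Summable.of_nonneg_of_le (fun k => abs_nonneg _) hfg hgsum.summable
  have hT : |∑' k, f k| ≤ (3 * C₁) * (25/7) := by
    have hb1 : |∑' k, f k| ≤ ∑' k, |f k| := by
      simpa [Real.norm_eq_abs] using norm_tsum_le_tsum_norm (f := f) (by simpa [Real.norm_eq_abs] using habs)
    have hb2 : ∑' k, |f k| ≤ ∑' k, g k := Summable.tsum_le_tsum hfg habs hgsum.summable
    rw [hgsum.tsum_eq] at hb2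
    linarith
  have hrem : landauRemainder (m+1) n = landauLambda n / Real.pi * ∑' k, f k := rfl
  rw [hrem, abs_mul, abs_of_pos (by positivity : (0:ℝ) < landauLambda n / Real.pi)]
  calc landauLambda n / Real.pi * |∑' k, f k|
      ≤ landauLambda n / Real.pi * ((3 * C₁) * (25/7)) :=
        mul_le_mul_of_nonneg_left hT (by positivity)
    _ = landauLambda n / Real.pi * (3 * C₁ * (25/7)) := by ring

end LandauAux

/-- The bound `|R_M| ≤ 4λ_n Γ(n)Γ(M+1/2)²/(π² Γ(n−M))` for `n > M`, whence
`R_M = O(n^{−M})` as `n → ∞`. -/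
theorem landau_remainder_bound (M : ℕ) (hM : 0 < M) :
    (∀ n : ℕ, M < n →
      |landauRemainder M n| ≤ 4 * landauLambda n / Real.pi ^ 2 *
        (Real.Gamma n * Real.Gamma ((M : ℝ) + 1 / 2) ^ 2 / Real.Gamma ((n : ℝ) - M))) ∧
    (fun n : ℕ => landauRemainder M n) =O[Filter.atTop] fun n : ℕ => (n : ℝ) ^ (-(M : ℤ)) := by
  obtain ⟨m, rfl⟩ : ∃ m, M = m + 1 := ⟨M - 1, (Nat.succ_pred_eq_of_pos hM).symm⟩
  have hπ := Real.pi_pos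
  constructor
  · intro n hn
    have hn2 : m + 2 ≤ n := hn
    have hn0 : 0 < n := by omega
    have hlam := LandauAux.lambda_pos hn0
    have hrem := LandauAux.remainder_le m n hn2
    refine hrem.trans ?_
    have hx : (0:ℝ) < (n:ℝ) - ((m+1:ℕ):ℝ) := by
      have : ((m:ℝ)+2) ≤ (n:ℝ) := by exact_mod_cast hn2
      push_cast
      linarith
    have hΓx := Real.Gamma_pos_of_pos hx
    have hgn : Real.Gamma (n:ℝ) =
        rpoch ((n:ℝ) - ((m+1:ℕ):ℝ)) (m+1) * Real.Gamma ((n:ℝ) - ((m+1:ℕ):ℝ)) := by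
      rw [show (n:ℝ) = ((n:ℝ) - ((m+1:ℕ):ℝ)) + ((m+1:ℕ):ℝ) by ring]
      rw [LandauAux.Gamma_add_nat hx (m+1)]
      rw [show ((n:ℝ) - ((m+1:ℕ):ℝ)) + ((m+1:ℕ):ℝ) = (n:ℝ) by ring]
    have hgm : Real.Gamma (((m+1:ℕ):ℝ) + 1/2) ^ 2 = rpoch (1/2) (m+1) ^ 2 * Real.pi := by
      rw [show (((m+1:ℕ):ℝ) + 1/2) = (1/2 : ℝ) + ((m+1:ℕ):ℝ) by ring]
      rw [LandauAux.Gamma_add_nat (by norm_num : (0:ℝ) < 1/2) (m+1), Real.Gamma_one_half_eq]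
      rw [mul_pow, Real.sq_sqrt hπ.le]
    have p1 : (0:ℝ) < rpoch (1/2) (m+1) := LandauAux.rpoch_pos (by norm_num) _
    have p2 : (0:ℝ) < rpoch ((n:ℝ)+1) (m+1) := LandauAux.rpoch_pos (by positivity) _
    have p5 : (0:ℝ) < (Nat.factorial m : ℝ) := by exact_mod_cast Nat.factorial_pos m
    have hR1 : (1:ℝ) ≤ rpoch ((n:ℝ) - ((m+1:ℕ):ℝ)) (m+1) := by
      apply LandauAux.one_le_rpoch
      have : ((m:ℝ)+2) ≤ (n:ℝ) := by exact_mod_cast hn2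
      push_cast
      linarith
    have hRpos : (0:ℝ) < rpoch ((n:ℝ) - ((m+1:ℕ):ℝ)) (m+1) := lt_of_lt_of_le one_pos hR1
    have hD3 : (3:ℝ) ≤ rpoch ((n:ℝ)+1) (m+1) := by
      rw [LandauAux.rpoch_succ]
      have hn' : (0:ℝ) ≤ n := Nat.cast_nonneg n
      have hone : (1:ℝ) ≤ rpoch ((n:ℝ)+1) m := LandauAux.one_le_rpoch (by linarith) m
      have hmn : ((m:ℝ)+2) ≤ (n:ℝ) := by exact_mod_cast hn2
      have hm0 : (0:ℝ) ≤ m := Nat.cast_nonneg m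
      nlinarith
    have hfact1 : (1:ℝ) ≤ (Nat.factorial m : ℝ) := by exact_mod_cast Nat.one_le_iff_ne_zero.mpr (Nat.factorial_pos m).ne'
    have hfrac : (75/7:ℝ) / (rpoch ((n:ℝ)+1) (m+1) * (Nat.factorial m : ℝ)) ≤
        4 * rpoch ((n:ℝ) - ((m+1:ℕ):ℝ)) (m+1) := by
      rw [div_le_iff₀ (by positivity)]
      have h12 : (3:ℝ) ≤ rpoch ((n:ℝ)+1) (m+1) * (Nat.factorial m : ℝ) := by
        nlinarith [mul_nonneg p2.le (sub_nonneg.mpr hfact1)]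
      have h13 : (3:ℝ) ≤ rpoch ((n:ℝ) - ((m+1:ℕ):ℝ)) (m+1) *
          (rpoch ((n:ℝ)+1) (m+1) * (Nat.factorial m : ℝ)) := by
        nlinarith [mul_nonneg (sub_nonneg.mpr hR1) (by positivity : (0:ℝ) ≤ rpoch ((n:ℝ)+1) (m+1) * (Nat.factorial m : ℝ))]
      nlinarith [h13]
    have e2 : 4 * landauLambda n / Real.pi ^ 2 *
        (Real.Gamma (n:ℝ) * Real.Gamma (((m+1:ℕ):ℝ) + 1/2) ^ 2 / Real.Gamma ((n:ℝ) - ((m+1:ℕ):ℝ))) =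
        landauLambda n * rpoch (1/2) (m+1) ^ 2 / Real.pi *
          (4 * rpoch ((n:ℝ) - ((m+1:ℕ):ℝ)) (m+1)) := by
      rw [hgn, hgm]
      generalize hG : Real.Gamma ((n:ℝ) - ((m+1:ℕ):ℝ)) = G at hΓx ⊢
      field_simp [hΓx.ne', hπ.ne']
    have e1 : landauLambda n / Real.pi *
        (3 * (rpoch (1/2) (m+1) ^ 2 / (rpoch ((n:ℝ)+1) (m+1) * (Nat.factorial m : ℝ))) * (25/7)) =
        landauLambda n * rpoch (1/2) (m+1) ^ 2 / Real.pi *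
          ((75/7) / (rpoch ((n:ℝ)+1) (m+1) * (Nat.factorial m : ℝ))) := by
      field_simp
      ring
    rw [e1, e2]
    exact mul_le_mul_of_nonneg_left hfrac (by positivity)
  · rw [Asymptotics.isBigO_iff]
    refine ⟨(75/7) * rpoch (1/2) (m+1) ^ 2 / (Real.pi * (Nat.factorial m : ℝ)), ?_⟩
    filter_upwards [Filter.eventually_ge_atTop (m+2)] with n hn
    have hn0 : 0 < n := by omega
    have hnR : (0:ℝ) < n := by exact_mod_cast hn0
    have hlam := LandauAux.lambda_pos hn0
    have hlam1 := LandauAux.lambda_le_one hn0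
    have p1 : (0:ℝ) < rpoch (1/2) (m+1) := LandauAux.rpoch_pos (by norm_num) _
    have p2 : (0:ℝ) < rpoch ((n:ℝ)+1) (m+1) := LandauAux.rpoch_pos (by positivity) _
    have p5 : (0:ℝ) < (Nat.factorial m : ℝ) := by exact_mod_cast Nat.factorial_pos m
    have hpow : (0:ℝ) < (n:ℝ) ^ (m+1) := by positivity
    have hble := LandauAux.remainder_le m n hn
    rw [Real.norm_eq_abs, Real.norm_eq_abs]
    have hz : ((n:ℝ) ^ (-((m+1:ℕ):ℤ))) = ((n:ℝ) ^ (m+1))⁻¹ := by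
      rw [zpow_neg, zpow_natCast]
    rw [hz, abs_of_pos (by positivity : (0:ℝ) < ((n:ℝ) ^ (m+1))⁻¹)]
    refine hble.trans ?_
    have hpr : (n:ℝ) ^ (m+1) ≤ rpoch ((n:ℝ)+1) (m+1) := LandauAux.pow_le_rpoch hnR.le (m+1)
    calc landauLambda n / Real.pi *
        (3 * (rpoch (1/2) (m+1) ^ 2 / (rpoch ((n:ℝ)+1) (m+1) * (Nat.factorial m : ℝ))) * (25/7))
        ≤ 1 / Real.pi *
        (3 * (rpoch (1/2) (m+1) ^ 2 / ((n:ℝ) ^ (m+1) * (Nat.factorial m : ℝ))) * (25/7)) := by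
          have hdiv : rpoch (1/2) (m+1) ^ 2 / (rpoch ((n:ℝ)+1) (m+1) * (Nat.factorial m : ℝ)) ≤
              rpoch (1/2) (m+1) ^ 2 / ((n:ℝ) ^ (m+1) * (Nat.factorial m : ℝ)) := by
            apply div_le_div_of_nonneg_left (by positivity) (by positivity)
            exact mul_le_mul_of_nonneg_right hpr p5.le
          have hA : landauLambda n / Real.pi ≤ 1 / Real.pi := by
            exact div_le_div_of_nonneg_right hlam1 hπ.le
          have hB : 3 * (rpoch (1/2) (m+1) ^ 2 / (rpoch ((n:ℝ)+1) (m+1) * (Nat.factorial m : ℝ))) * (25/7) ≤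
              3 * (rpoch (1/2) (m+1) ^ 2 / ((n:ℝ) ^ (m+1) * (Nat.factorial m : ℝ))) * (25/7) := by
            linarith
          apply mul_le_mul hA hB (by positivity) (by positivity)
      _ = (75/7) * rpoch (1/2) (m+1) ^ 2 / (Real.pi * (Nat.factorial m : ℝ)) * ((n:ℝ) ^ (m+1))⁻¹ := by
          field_simp
          ring
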